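/- arXiv:1602.08062 — 3 statements merged into one kernel-verified Lean document; each statement's English description precedes it below -/
import Mathlib

section
/- Let z₀ : Fin n → Fin K be balanced with each community of size m = n/K (K ≥ 2), and let z : Fin n → Fin K be any assignment with d(z,z₀) = r, where d is the permutation-invariant Hamming distance. Define n↑↑(z,z₀) = #{(i,j): i<j, zᵢ=zⱼ, z₀ᵢ=z₀ⱼ}. Then n↑↑(z,z₀) ≥ (n-r)²/(2K) - (n-r)/2. -/
/-!
Take a relabeling `δ` realizing `r = d(z, z₀)`. On the `n - r` nodes where `δ ∘ z` agrees
with `z₀`, two nodes share a `z`-community exactly when they share a `z₀`-community. Splitting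
these nodes into the `K` communities of `z₀`, with sizes `a₁, …, a_K` summing to `n - r`,
already gives `∑ₖ aₖ(aₖ - 1)/2` pairs counted by `n↑↑`, and Cauchy–Schwarz bounds this below
by `(n - r)²/(2K) - (n - r)/2`.
-/

open Finset

/-- Permutation-invariant Hamming distance between community assignments. -/
def permDist {n K : ℕ} (z z' : Fin n → Fin K) : ℕ :=
  univ.inf' univ_nonempty (fun δ : Equiv.Perm (Fin K) => hammingDist (⇑δ ∘ z) z')

/-- `n↑↑(z,z₀)`: pairs i < j together under both `z` and `z₀`. -/
def nUpUp {n K : ℕ} (z z₀ : Fin n → Fin K) : ℕ :=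
  (univ.filter (fun p : Fin n × Fin n =>
    p.1 < p.2 ∧ z p.1 = z p.2 ∧ z₀ p.1 = z₀ p.2)).card

theorem sq_sum_div_sub_le_sum_choose_two {ι : Type*} (s : Finset ι) (a : ι → ℕ) :
    ((∑ k ∈ s, a k : ℕ) : ℝ) ^ 2 / (2 * #s) - (∑ k ∈ s, a k : ℕ) / 2
      ≤ ∑ k ∈ s, ((a k).choose 2 : ℝ) := by
  have cauchySchwarz :
      ((∑ k ∈ s, a k : ℕ) : ℝ) ^ 2 ≤ (∑ k ∈ s, (a k : ℝ) ^ 2) / 2 * (2 * #s) := by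
    have := sq_sum_le_card_mul_sum_sq (s := s) (f := fun k => (a k : ℝ))
    push_cast
    linarith
  have hchoose : ∑ k ∈ s, ((a k).choose 2 : ℝ)
      = (∑ k ∈ s, (a k : ℝ) ^ 2) / 2 - (∑ k ∈ s, a k : ℕ) / 2 := by
    rw [Nat.cast_sum, sum_div, sum_div, ← sum_sub_distrib]
    refine sum_congr rfl fun k _ => ?_
    rw [Nat.cast_choose_two]
    ring
  rw [hchoose]
  exact sub_le_sub_right (div_le_of_le_mul₀ (by positivity) (by positivity) cauchySchwarz) _

section PairsInFibers

variable {α β : Type*} [LinearOrder α] [DecidableEq β]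

theorem card_pairs_lt_eq_sum_choose_two [Fintype β] (s : Finset α) (f : α → β) :
    #{p ∈ s ×ˢ s | p.1 < p.2 ∧ f p.1 = f p.2} = ∑ k, (#{i ∈ s | f i = k}).choose 2 := by
  rw [card_eq_sum_card_fiberwise (f := fun p => f p.1) (t := (univ : Finset β))
    fun _ _ => mem_univ _]
  refine sum_congr rfl fun k _ => ?_
  rw [← card_product_filter_lt]
  congr 1
  ext ⟨i, j⟩
  simp only [mem_filter, mem_product]
  grind

theorem sq_card_div_sub_le_card_pairs_lt [Fintype β] (s : Finset α) (f : α → β) :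
    (#s : ℝ) ^ 2 / (2 * Fintype.card β) - #s / 2
      ≤ #{p ∈ s ×ˢ s | p.1 < p.2 ∧ f p.1 = f p.2} := by
  have hfibers : #s = ∑ k : β, #{i ∈ s | f i = k} :=
    card_eq_sum_card_fiberwise fun _ _ => mem_univ _
  rw [card_pairs_lt_eq_sum_choose_two, Nat.cast_sum, hfibers, ← card_univ]
  exact sq_sum_div_sub_le_sum_choose_two univ _

end PairsInFibers

section CommunityAssignments

variable {n K : ℕ}

def agreementSet (δ : Equiv.Perm (Fin K)) (z z₀ : Fin n → Fin K) : Finset (Fin n) :=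
  {i | δ (z i) = z₀ i}

theorem exists_perm_card_agreementSet_add_permDist (z z₀ : Fin n → Fin K) :
    ∃ δ : Equiv.Perm (Fin K), #(agreementSet δ z z₀) + permDist z z₀ = n := by
  obtain ⟨δ, -, hδ⟩ := exists_mem_eq_inf' univ_nonempty
    fun δ : Equiv.Perm (Fin K) => hammingDist (δ ∘ z) z₀
  refine ⟨δ, ?_⟩
  rw [permDist, hδ, hammingDist, agreementSet]
  simpa using card_filter_add_card_filter_not (s := univ) (p := fun i => δ (z i) = z₀ i)

theorem card_pairs_agreementSet_le_nUpUp (z z₀ : Fin n → Fin K) (δ : Equiv.Perm (Fin K)) :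
    #{p ∈ agreementSet δ z z₀ ×ˢ agreementSet δ z z₀ | p.1 < p.2 ∧ z₀ p.1 = z₀ p.2}
      ≤ nUpUp z z₀ := by
  refine card_le_card fun p hp => ?_
  simp only [agreementSet, mem_filter, mem_product, mem_univ, true_and] at hp ⊢
  obtain ⟨⟨h₁, h₂⟩, hlt, h₀⟩ := hp
  exact ⟨hlt, δ.injective (by rw [h₁, h₂, h₀]), h₀⟩

end CommunityAssignments

theorem nUpUp_lower_bound_general {n K r : ℕ}
    (z z₀ : Fin n → Fin K)
    (hr : permDist z z₀ = r) :
    ((n : ℝ) - r) ^ 2 / (2 * K) - ((n : ℝ) - r) / 2 ≤ (nUpUp z z₀ : ℝ) := by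
  obtain ⟨δ, hδ⟩ := exists_perm_card_agreementSet_add_permDist z z₀
  have hagree : (n : ℝ) - r = #(agreementSet δ z z₀) := by
    rw [← hr, sub_eq_iff_eq_add]
    exact_mod_cast hδ.symm
  rw [hagree]
  calc _ ≤ (#{p ∈ agreementSet δ z z₀ ×ˢ agreementSet δ z z₀ |
          p.1 < p.2 ∧ z₀ p.1 = z₀ p.2} : ℝ) := by
        simpa using sq_card_div_sub_le_card_pairs_lt (agreementSet δ z z₀) z₀
    _ ≤ nUpUp z z₀ := mod_cast card_pairs_agreementSet_le_nUpUp z z₀ δ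

theorem nUpUp_lower_bound {n K m r : ℕ} (hK : 2 ≤ K) (hnm : n = K * m)
    (z z₀ : Fin n → Fin K)
    (hbal : ∀ h : Fin K, (univ.filter (fun i => z₀ i = h)).card = m)
    (hr : permDist z z₀ = r) :
    ((n : ℝ) - r) ^ 2 / (2 * K) - ((n : ℝ) - r) / 2 ≤ (nUpUp z z₀ : ℝ) :=
  nUpUp_lower_bound_general z z₀ hr
end

section
/- Let z₀ : Fin n → Fin K be balanced with community sizes m = n/K, and z any assignment achieving permutation-invariant distance r from z₀ (with the labeling minimizing Hamming distance). Define n↓↑(z,z₀) = #{(i,j): i<j, zᵢ≠zⱼ, z₀ᵢ=z₀ⱼ}. Then n↓↑(z,z₀) ≤ m·r - r²/(2(K-1)). -/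
/-!
Fix a true community `k` of size `m` and let `a_k` of its members be labelled `l ≠ k` by `z`,
with `c_{kl}` members carrying label `l`. The ordered pairs of community `k` separated by `z`
number `m² - ∑_l c_{kl}²`, and Cauchy–Schwarz over the `K - 1` wrong labels gives
`∑_{l ≠ k} c_{kl}² ≥ a_k² / (K - 1)`, so at most `2 m a_k - K a_k² / (K - 1)` pairs are separated.
Summing over `k`, with `∑_k a_k = r` and, by Cauchy–Schwarz again, `∑_k a_k² ≥ r² / K`, yields
`2 n↓↑ ≤ 2 m r - r² / (K - 1)`.
-/

open Finset

/-- `n↓↑(z,z₀)`: pairs i < j separated by `z` but together under `z₀`. -/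
def nDownUp {n K : ℕ} (z z₀ : Fin n → Fin K) : ℕ :=
  (univ.filter (fun p : Fin n × Fin n =>
    p.1 < p.2 ∧ z p.1 ≠ z p.2 ∧ z₀ p.1 = z₀ p.2)).card

section Counting

variable {ι α β : Type*}

theorem card_filter_eq_product_eq_sum_sq [Fintype β] [DecidableEq β] (s : Finset α)
    (f : α → β) :
    #{p ∈ s ×ˢ s | f p.1 = f p.2} = ∑ b, #{i ∈ s | f i = b} ^ 2 := by
  rw [card_eq_sum_card_fiberwise (f := fun p => f p.1) (t := univ) fun _ _ => mem_univ _]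
  refine sum_congr rfl fun b _ => ?_
  rw [sq, ← card_product, filter_filter]
  congr 1
  ext ⟨i, j⟩
  simp only [mem_filter, mem_product]
  grind

theorem card_filter_ne_product_add_sum_sq [Fintype β] [DecidableEq β] (s : Finset α)
    (f : α → β) :
    #{p ∈ s ×ˢ s | f p.1 ≠ f p.2} + ∑ b, #{i ∈ s | f i = b} ^ 2 = #s ^ 2 := by
  rw [← card_filter_eq_product_eq_sum_sq, add_comm, card_filter_add_card_filter_not,
    card_product, sq]

theorem sum_card_filter_ne_eq_hammingDist [Fintype α] [Fintype β] [DecidableEq β]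
    (f g : α → β) :
    ∑ b, #{i ∈ univ.filter (g · = b) | f i ≠ b} = hammingDist f g := by
  rw [hammingDist, card_eq_sum_card_fiberwise (f := g) (t := univ) fun _ _ => mem_univ _]
  refine sum_congr rfl fun b _ => ?_
  rw [filter_filter]
  congr 1
  ext i
  simp only [mem_filter, mem_univ, true_and]
  grind

theorem card_filter_ne_and_eq_eq_sum [Fintype α] [Fintype β] [DecidableEq β] (f g : α → β) :
    #{p : α × α | f p.1 ≠ f p.2 ∧ g p.1 = g p.2}
      = ∑ b, #{p ∈ univ.filter (g · = b) ×ˢ univ.filter (g · = b) | f p.1 ≠ f p.2} := by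
  rw [card_eq_sum_card_fiberwise (f := fun p => g p.1) (t := univ) fun _ _ => mem_univ _]
  refine sum_congr rfl fun b _ => ?_
  rw [filter_filter]
  congr 1
  ext ⟨i, j⟩
  simp only [mem_filter, mem_univ, mem_product, true_and]
  grind

theorem card_filter_rel_eq_two_mul [Fintype α] [LinearOrder α] (R : α → α → Prop)
    [DecidableRel R] (hsymm : ∀ a b, R a b → R b a) (hirr : ∀ a, ¬R a a) :
    #{p : α × α | R p.1 p.2} = 2 * #{p : α × α | p.1 < p.2 ∧ R p.1 p.2} := by
  have hswap : #{p : α × α | p.2 < p.1 ∧ R p.1 p.2} = #{p : α × α | p.1 < p.2 ∧ R p.1 p.2} :=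
    card_nbij' Prod.swap Prod.swap (fun p hp => by simp_all) (fun p hp => by simp_all)
      (fun _ _ => rfl) (fun _ _ => rfl)
  rw [two_mul]
  nth_rw 2 [← hswap]
  rw [← card_union_of_disjoint (disjoint_filter.2 fun p _ h h' => lt_asymm h.1 h'.1)]
  congr 1
  ext ⟨a, b⟩
  simp only [mem_filter, mem_univ, true_and, mem_union]
  grind [lt_trichotomy a b]

theorem card_sub_one_mul_sq_sub_sum_sq_le [Fintype β] [DecidableEq β] (c : β → ℝ) (k : β)
    {m a : ℝ} (hm : ∑ l, c l = m) (ha : c k = m - a) :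
    (Fintype.card β - 1) * (m ^ 2 - ∑ l, c l ^ 2)
      ≤ 2 * (Fintype.card β - 1) * m * a - Fintype.card β * a ^ 2 := by
  have hcs := sq_sum_le_card_mul_sum_sq (s := univ.erase k) (f := c)
  rw [sum_erase_eq_sub (mem_univ k), sum_erase_eq_sub (mem_univ k),
    card_erase_of_mem (mem_univ k), Nat.cast_sub (card_pos.2 ⟨k, mem_univ k⟩), Nat.cast_one,
    card_univ, hm, ha] at hcs
  linear_combination hcs

theorem card_sub_one_mul_card_filter_ne_product_le [Fintype β] [DecidableEq β] (s : Finset α)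
    (f : α → β) (k : β) :
    (Fintype.card β - 1) * (#{p ∈ s ×ˢ s | f p.1 ≠ f p.2} : ℝ)
      ≤ 2 * (Fintype.card β - 1) * #s * #{i ∈ s | f i ≠ k}
        - Fintype.card β * (#{i ∈ s | f i ≠ k} : ℝ) ^ 2 := by
  have hm : ∑ l, (#{i ∈ s | f i = l} : ℝ) = #s := by
    exact_mod_cast (card_eq_sum_card_fiberwise fun _ _ => mem_univ _).symm
  have ha : (#{i ∈ s | f i = k} : ℝ) = #s - #{i ∈ s | f i ≠ k} := by
    rw [eq_sub_iff_add_eq]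
    exact_mod_cast card_filter_add_card_filter_not _
  have hsep : (#{p ∈ s ×ˢ s | f p.1 ≠ f p.2} : ℝ)
      = #s ^ 2 - ∑ l, (#{i ∈ s | f i = l} : ℝ) ^ 2 := by
    rw [eq_sub_iff_add_eq]
    exact_mod_cast card_filter_ne_product_add_sum_sq s f
  rw [hsep]
  exact card_sub_one_mul_sq_sub_sum_sq_le _ k hm ha

theorem card_sub_one_mul_sum_add_sq_sum_le (s : Finset ι) (U a : ι → ℝ) (m : ℝ)
    (h : ∀ k ∈ s, (#s - 1) * U k ≤ 2 * (#s - 1) * m * a k - #s * a k ^ 2) :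
    (#s - 1) * ∑ k ∈ s, U k + (∑ k ∈ s, a k) ^ 2 ≤ 2 * (#s - 1) * m * ∑ k ∈ s, a k := by
  have hsum := sum_le_sum h
  rw [← mul_sum, sum_sub_distrib, ← mul_sum, ← mul_sum] at hsum
  linarith [sq_sum_le_card_mul_sum_sq (s := s) (f := a)]

end Counting

theorem two_mul_nDownUp {n K : ℕ} (z z₀ : Fin n → Fin K) :
    2 * nDownUp z z₀
      = ∑ k, #{p ∈ univ.filter (z₀ · = k) ×ˢ univ.filter (z₀ · = k) | z p.1 ≠ z p.2} := by
  rw [← card_filter_ne_and_eq_eq_sum,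
    card_filter_rel_eq_two_mul (fun i j => z i ≠ z j ∧ z₀ i = z₀ j)
      (fun _ _ h => ⟨Ne.symm h.1, h.2.symm⟩) (fun _ h => h.1 rfl)]
  rfl

theorem card_sub_one_mul_two_mul_nDownUp_add_sq_le {n K m : ℕ} (z z₀ : Fin n → Fin K)
    (hbal : ∀ k, #{i | z₀ i = k} = m) :
    ((K : ℝ) - 1) * (2 * nDownUp z z₀) + (hammingDist z z₀ : ℝ) ^ 2
      ≤ 2 * ((K : ℝ) - 1) * m * hammingDist z z₀ := by
  have key := card_sub_one_mul_sum_add_sq_sum_le univ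
    (fun k => #{p ∈ univ.filter (z₀ · = k) ×ˢ univ.filter (z₀ · = k) | z p.1 ≠ z p.2})
    (fun k => #{i ∈ univ.filter (z₀ · = k) | z i ≠ k}) m fun k _ => by
      simpa only [card_univ, Fintype.card_fin, hbal] using
        card_sub_one_mul_card_filter_ne_product_le (univ.filter (z₀ · = k)) z k
  rw [card_univ, Fintype.card_fin, ← Nat.cast_sum, ← Nat.cast_sum, ← two_mul_nDownUp,
    sum_card_filter_ne_eq_hammingDist] at key
  exact_mod_cast key

theorem nDownUp_upper_bound_general {n K m r : ℕ} (hK : 2 ≤ K)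
    (z z₀ : Fin n → Fin K)
    (hbal : ∀ h : Fin K, (univ.filter (fun i => z₀ i = h)).card = m)
    (hmin : hammingDist z z₀ = r) :
    (nDownUp z z₀ : ℝ) ≤ (m : ℝ) * r - (r : ℝ) ^ 2 / (2 * ((K : ℝ) - 1)) := by
  have hK1 : (0 : ℝ) < 2 * ((K : ℝ) - 1) := by
    have : (2 : ℝ) ≤ K := mod_cast hK
    linarith
  have key := hmin ▸ card_sub_one_mul_two_mul_nDownUp_add_sq_le z z₀ hbal
  rw [le_sub_iff_add_le, ← le_sub_iff_add_le', div_le_iff₀ hK1]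
  linarith

theorem nDownUp_upper_bound {n K m r : ℕ} (hK : 2 ≤ K) (hnm : n = K * m)
    (z z₀ : Fin n → Fin K)
    (hbal : ∀ h : Fin K, (univ.filter (fun i => z₀ i = h)).card = m)
    (hr : permDist z z₀ = r) (hmin : hammingDist z z₀ = r) :
    (nDownUp z z₀ : ℝ) ≤ (m : ℝ) * r - (r : ℝ) ^ 2 / (2 * ((K : ℝ) - 1)) :=
  nDownUp_upper_bound_general hK z z₀ hbal hmin
end

section
/- Let z₀ be balanced with K groups of size m and let z achieve permutation-invariant distance r from z₀ with r/m → 0. Then n↑↓(z,z₀) + n↓↑(z,z₀) ≥ 2rm(1 - r/m); in particular, for r ≤ m/2 this sum is at least rm. -/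
/-!
Call an index `i` correct when `z i = z₀ i` and wrong otherwise; there are `r` wrong indices.
For a wrong `j`, every correct `i` with `z₀ i = z₀ j` forms with `j` a pair counted by `n↓↑`,
and every correct `i` with `z₀ i = z j` one counted by `n↑↓`; no unordered pair arises twice,
since exactly one of its members is correct. A true group has `m` members of which at most `r`
are wrong, so each wrong `j` contributes at least `2 (m - r)` pairs, and
`n↑↓ + n↓↑ ≥ 2 r (m - r) = 2 r m (1 - r / m)`.
-/

open Finset

/-- `n↑↓(z,z₀)`: pairs i < j together under `z` but separated by `z₀`. -/
def nUpDown {n K : ℕ} (z z₀ : Fin n → Fin K) : ℕ :=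
  (univ.filter (fun p : Fin n × Fin n =>
    p.1 < p.2 ∧ z p.1 = z p.2 ∧ z₀ p.1 ≠ z₀ p.2)).card

theorem card_le_card_filter_lt_of_swap_notMem {ι : Type*} [Fintype ι] [LinearOrder ι]
    (P : ι × ι → Prop) [DecidablePred P] (hP : ∀ p, P p → P p.swap) (S : Finset (ι × ι))
    (hSP : ∀ p ∈ S, P p) (hS : ∀ p ∈ S, p.swap ∉ S) :
    #S ≤ #{p : ι × ι | p.1 < p.2 ∧ P p} := by
  have hne : ∀ p ∈ S, p.1 ≠ p.2 := by
    rintro ⟨i, j⟩ hp (rfl : i = j)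
    exact hS _ hp hp
  refine card_le_card_of_injOn (fun p => (min p.1 p.2, max p.1 p.2)) ?_ ?_
  · rintro ⟨i, j⟩ hp
    simp only [coe_filter, mem_univ, true_and, Set.mem_ofPred_eq]
    rcases lt_or_gt_of_ne (hne _ hp) with h | h
    · rw [min_eq_left h.le, max_eq_right h.le]
      exact ⟨h, hSP _ hp⟩
    · rw [min_eq_right h.le, max_eq_left h.le]
      exact ⟨h, hP _ (hSP _ hp)⟩
  · -- `(min, max)` identifies only `p` with `p.swap`, and `S` never holds both
    rintro ⟨i, j⟩ hp ⟨i', j'⟩ hp' h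
    have := hS _ hp
    have := hS _ hp'
    simp only [Prod.mk.injEq] at h
    rcases le_total i j with hij | hij <;> rcases le_total i' j' with hij' | hij' <;>
      simp_all

section Labellings

variable {ι κ : Type*} [Fintype ι] [DecidableEq κ]

/-- With `f = z₀` these pairs are split by `z` inside a true group, with `f = z` they are
joined by `z` across true groups. -/
def correctWrongPairs (z z₀ f : ι → κ) : Finset (ι × ι) :=
  {p | z p.1 = z₀ p.1 ∧ z p.2 ≠ z₀ p.2 ∧ z₀ p.1 = f p.2}

@[simp]
theorem mem_correctWrongPairs {z z₀ f : ι → κ} {p : ι × ι} :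
    p ∈ correctWrongPairs z z₀ f ↔ z p.1 = z₀ p.1 ∧ z p.2 ≠ z₀ p.2 ∧ z₀ p.1 = f p.2 := by
  simp [correctWrongPairs]

theorem swap_notMem_correctWrongPairs {z z₀ f : ι → κ} {p : ι × ι}
    (hp : p ∈ correctWrongPairs z z₀ f) : p.swap ∉ correctWrongPairs z z₀ f :=
  fun hswap => (mem_correctWrongPairs.1 hp).2.1 (mem_correctWrongPairs.1 hswap).1

theorem card_correctWrongPairs [DecidableEq ι] (z z₀ f : ι → κ) :
    #(correctWrongPairs z z₀ f) = ∑ j with z j ≠ z₀ j, #{i | z i = z₀ i ∧ z₀ i = f j} := by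
  rw [card_eq_sum_card_fiberwise (f := Prod.snd) (t := {j | z j ≠ z₀ j}) fun p hp => by
    simp_all]
  refine sum_congr rfl fun j hj => card_nbij' Prod.fst (·, j) ?_ ?_ ?_ ?_ <;> intro p hp <;>
    simp_all [Prod.ext_iff]

theorem le_card_filter_correct_add_hammingDist [DecidableEq ι] (z z₀ : ι → κ) (k : κ) :
    #{i | z₀ i = k} ≤ #{i | z i = z₀ i ∧ z₀ i = k} + hammingDist z z₀ := by
  refine (card_le_card fun i => ?_).trans (card_union_le _ _)
  simp only [mem_union, mem_filter, mem_univ, true_and]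
  tauto

theorem mul_hammingDist_le_card_correctWrongPairs [DecidableEq ι] {m : ℕ} (z z₀ f : ι → κ)
    (hbal : ∀ k, #{i | z₀ i = k} = m) :
    m * hammingDist z z₀ ≤ #(correctWrongPairs z z₀ f) + hammingDist z z₀ * hammingDist z z₀ := by
  have hd : #{j | z j ≠ z₀ j} = hammingDist z z₀ := rfl
  calc m * hammingDist z z₀ = ∑ j with z j ≠ z₀ j, m := by
        rw [sum_const, hd, smul_eq_mul, mul_comm]
    _ ≤ ∑ j with z j ≠ z₀ j, (#{i | z i = z₀ i ∧ z₀ i = f j} + hammingDist z z₀) :=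
      sum_le_sum fun j _ => hbal (f j) ▸ le_card_filter_correct_add_hammingDist z z₀ (f j)
    _ = _ := by rw [sum_add_distrib, ← card_correctWrongPairs, sum_const, hd, smul_eq_mul]

end Labellings

section Fin

variable {n K : ℕ} (z z₀ : Fin n → Fin K)

theorem card_correctWrongPairs_self_le_nDownUp : #(correctWrongPairs z z₀ z₀) ≤ nDownUp z z₀ :=
  card_le_card_filter_lt_of_swap_notMem _ (fun _ hp => ⟨Ne.symm hp.1, hp.2.symm⟩) _
    (fun p hp => by
      obtain ⟨hcorrect, hwrong, hgroup⟩ := mem_correctWrongPairs.1 hp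
      exact ⟨by rw [hcorrect, hgroup]; exact Ne.symm hwrong, hgroup⟩)
    fun _ => swap_notMem_correctWrongPairs

theorem card_correctWrongPairs_le_nUpDown : #(correctWrongPairs z z₀ z) ≤ nUpDown z z₀ :=
  card_le_card_filter_lt_of_swap_notMem _ (fun _ hp => ⟨hp.1.symm, Ne.symm hp.2⟩) _
    (fun p hp => by
      obtain ⟨hcorrect, hwrong, hgroup⟩ := mem_correctWrongPairs.1 hp
      exact ⟨hcorrect.trans hgroup, by rw [hgroup]; exact hwrong⟩)
    fun _ => swap_notMem_correctWrongPairs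

theorem two_mul_mul_hammingDist_le_nUpDown_add_nDownUp {m : ℕ}
    (hbal : ∀ k, #{i | z₀ i = k} = m) :
    2 * m * hammingDist z z₀ ≤
      nUpDown z z₀ + nDownUp z z₀ + 2 * hammingDist z z₀ * hammingDist z z₀ := by
  have hup := mul_hammingDist_le_card_correctWrongPairs z z₀ z hbal
  have hdown := mul_hammingDist_le_card_correctWrongPairs z z₀ z₀ hbal
  have := card_correctWrongPairs_le_nUpDown z z₀
  have := card_correctWrongPairs_self_le_nDownUp z z₀
  linarith

end Fin

theorem nUpDown_add_nDownUp_lower_bound_general {n K m r : ℕ} (hm : 0 < m)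
    (z z₀ : Fin n → Fin K)
    (hbal : ∀ h : Fin K, (univ.filter (fun i => z₀ i = h)).card = m)
    (hmin : hammingDist z z₀ = r) :
    2 * (r : ℝ) * m * (1 - (r : ℝ) / m) ≤ (nUpDown z z₀ : ℝ) + (nDownUp z z₀ : ℝ) ∧
    ((r : ℝ) ≤ (m : ℝ) / 2 →
      (r : ℝ) * m ≤ (nUpDown z z₀ : ℝ) + (nDownUp z z₀ : ℝ)) := by
  have hcount := two_mul_mul_hammingDist_le_nUpDown_add_nDownUp z z₀ hbal
  rw [hmin] at hcount
  rify at hcount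
  have hlhs : 2 * (r : ℝ) * m * (1 - (r : ℝ) / m) = 2 * m * r - 2 * r * r := by
    field_simp
  rw [hlhs]
  refine ⟨by linarith, fun hhalf => ?_⟩
  nlinarith [(Nat.cast_nonneg r : (0 : ℝ) ≤ r)]

theorem nUpDown_add_nDownUp_lower_bound {n K m r : ℕ} (hK : 2 ≤ K) (hm : 0 < m)
    (hnm : n = K * m) (z z₀ : Fin n → Fin K)
    (hbal : ∀ h : Fin K, (univ.filter (fun i => z₀ i = h)).card = m)
    (hr : permDist z z₀ = r) (hmin : hammingDist z z₀ = r) :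
    2 * (r : ℝ) * m * (1 - (r : ℝ) / m) ≤ (nUpDown z z₀ : ℝ) + (nDownUp z z₀ : ℝ) ∧
    ((r : ℝ) ≤ (m : ℝ) / 2 →
      (r : ℝ) * m ≤ (nUpDown z z₀ : ℝ) + (nDownUp z z₀ : ℝ)) :=
  nUpDown_add_nDownUp_lower_bound_general hm z z₀ hbal hmin
end
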